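/- Let (Ω, ℱ, P) be a probability space, let xₙ : Ω → ℝ^p be measurable random vectors and x₀ ∈ ℝ^p, let yₙ : Ω → ℝ be random variables and y₀ ∈ ℝ. Let cₙ, dₙ be positive reals with cₙ/dₙ → 0 and dₙ → ∞. Assume: (i) cₙ(xₙ − x₀) converges in distribution to a centered Gaussian random vector with covariance matrix Σ₁; (ii) dₙ(yₙ − y₀) converges in distribution to a centered normal random variable with variance σ₂²; (iii) there exists ε > 0 such that |yₙ(ω)| ≥ ε almost surely for every n, and |y₀| ≥ ε. Then cₙ(xₙ·yₙ − x₀·y₀) − cₙ(xₙ − x₀)·y₀ converges to 0 in probability; that is, cₙ(xₙ·yₙ − x₀·y₀) = cₙ(xₙ − x₀)·y₀ + o_P(1). -/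

import Mathlib

/-!
With `Wₙ = dₙ(yₙ - y₀)` and `Vₙ = cₙ(xₙ - x₀)`, the difference to control is
`(cₙ/dₙ) Wₙ x₀ + dₙ⁻¹ Wₙ Vₙ`. Both `Wₙ` and `Vₙ` converge in distribution, hence are bounded in
probability (the portmanteau theorem on the closed tails `{M ≤ ‖z‖}`); products of sequences
bounded in probability stay bounded in probability, and a deterministic null sequence times a
sequence bounded in probability tends to `0` in probability.
-/

open MeasureTheory Filter Matrix ProbabilityTheory
open scoped Topology ENNReal

namespace MeasureTheory

variable {Ω ι E : Type*} [MeasurableSpace Ω] {μ : Measure Ω} {l : Filter ι}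

theorem tendsto_measure_norm_ge_atTop_zero [SeminormedAddCommGroup E] [MeasurableSpace E]
    [OpensMeasurableSpace E] (ν : Measure E) [IsFiniteMeasure ν] :
    Tendsto (fun r : ℝ ↦ ν {x | r ≤ ‖x‖}) atTop (𝓝 0) := by
  have h_empty : ⋂ r : ℝ, {x : E | r ≤ ‖x‖} = ∅ :=
    Set.eq_empty_of_forall_notMem fun x hx ↦
      (lt_add_one ‖x‖).not_ge (Set.mem_iInter.mp hx (‖x‖ + 1))
  have h := tendsto_measure_iInter_atTop (μ := ν) (s := fun r : ℝ ↦ {x : E | r ≤ ‖x‖})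
    (fun r ↦ (measurableSet_le measurable_const continuous_norm.measurable).nullMeasurableSet)
    (fun r s hrs x hx ↦ hrs.trans hx) ⟨0, measure_ne_top ν _⟩
  rwa [h_empty, measure_empty] at h

theorem TendstoInMeasure.add [SeminormedAddCommGroup E] {f f' : ι → Ω → E} {g g' : Ω → E}
    (hf : TendstoInMeasure μ f l g) (hf' : TendstoInMeasure μ f' l g') :
    TendstoInMeasure μ (fun i ω ↦ f i ω + f' i ω) l (fun ω ↦ g ω + g' ω) := by
  rw [tendstoInMeasure_iff_norm] at hf hf' ⊢
  intro δ hδ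
  refine tendsto_of_tendsto_of_tendsto_of_le_of_le tendsto_const_nhds
    (by simpa using (hf (δ / 2) (half_pos hδ)).add (hf' (δ / 2) (half_pos hδ)))
    (fun _ ↦ zero_le) fun i ↦ ?_
  refine (measure_mono fun ω hω ↦ ?_).trans (measure_union_le _ _)
  by_contra h
  simp only [Set.mem_union, Set.mem_ofPred_eq, not_or, not_le] at h hω
  have := norm_add_le (f i ω - g ω) (f' i ω - g' ω)
  rw [add_sub_add_comm] at hω
  linarith [h.1, h.2]

/-- `X i = O_P(1)` along `l`. -/
def BoundedInProbability [Norm E] (μ : Measure Ω) (X : ι → Ω → E) (l : Filter ι) : Prop :=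
  ∀ η : ℝ≥0∞, 0 < η → ∃ M : ℝ, ∀ᶠ i in l, μ {ω | M ≤ ‖X i ω‖} ≤ η

theorem boundedInProbability_const [SeminormedAddCommGroup E] (x : E) :
    BoundedInProbability μ (fun _ _ ↦ x) l := fun _ _ ↦
  ⟨‖x‖ + 1, Eventually.of_forall fun _ ↦ by norm_num⟩

theorem BoundedInProbability.smul {𝕜 : Type*} [SeminormedRing 𝕜] [SeminormedAddCommGroup E]
    [Module 𝕜 E] [IsBoundedSMul 𝕜 E] {X : ι → Ω → 𝕜} {Y : ι → Ω → E}
    (hX : BoundedInProbability μ X l) (hY : BoundedInProbability μ Y l) :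
    BoundedInProbability μ (fun i ω ↦ X i ω • Y i ω) l := by
  intro η hη
  obtain ⟨M, hM⟩ := hX (η / 2) (ENNReal.half_pos hη.ne')
  obtain ⟨N, hN⟩ := hY (η / 2) (ENNReal.half_pos hη.ne')
  refine ⟨M * N, ?_⟩
  filter_upwards [hM, hN] with i hMi hNi
  calc μ {ω | M * N ≤ ‖X i ω • Y i ω‖}
      ≤ μ ({ω | M ≤ ‖X i ω‖} ∪ {ω | N ≤ ‖Y i ω‖}) := by
        refine measure_mono fun ω hω ↦ ?_
        by_contra h
        simp only [Set.mem_union, Set.mem_ofPred_eq, not_or, not_le] at h hω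
        exact hω.not_gt <| (norm_smul_le _ _).trans_lt <|
          mul_lt_mul'' h.1 h.2 (norm_nonneg _) (norm_nonneg _)
    _ ≤ η / 2 + η / 2 := (measure_union_le _ _).trans (add_le_add hMi hNi)
    _ = η := ENNReal.add_halves η

theorem BoundedInProbability.tendstoInMeasure_smul {𝕜 : Type*} [SeminormedRing 𝕜]
    [SeminormedAddCommGroup E] [Module 𝕜 E] [IsBoundedSMul 𝕜 E] {a : ι → 𝕜} {X : ι → Ω → E}
    (hX : BoundedInProbability μ X l) (ha : Tendsto a l (𝓝 0)) :
    TendstoInMeasure μ (fun i ω ↦ a i • X i ω) l 0 := by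
  rw [tendstoInMeasure_iff_norm]
  intro δ hδ
  rw [ENNReal.tendsto_nhds_zero]
  intro η hη
  obtain ⟨M, hM⟩ := hX η hη
  have h_small : ∀ᶠ i in l, ‖a i‖ * max M 0 < δ := by
    refine Tendsto.eventually_lt_const hδ ?_
    simpa using (tendsto_norm_zero.comp ha).mul_const (max M 0)
  filter_upwards [hM, h_small] with i hMi hi
  refine (measure_mono fun ω hω ↦ ?_).trans hMi
  by_contra h
  simp only [Set.mem_ofPred_eq, Pi.zero_apply, sub_zero, not_le] at h hω
  exact hω.not_gt <| (norm_smul_le _ _).trans_lt <| (mul_le_mul_of_nonneg_left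
    (h.le.trans (le_max_left M 0)) (norm_nonneg _)).trans_lt hi

theorem TendstoInDistribution.boundedInProbability {Ω' : Type*} [MeasurableSpace Ω']
    [IsProbabilityMeasure μ] {μ' : Measure Ω'} [IsProbabilityMeasure μ']
    [SeminormedAddCommGroup E] [MeasurableSpace E] [OpensMeasurableSpace E]
    {X : ι → Ω → E} {Z : Ω' → E} (h : TendstoInDistribution X l Z (fun _ ↦ μ) μ') :
    BoundedInProbability μ X l := by
  intro η hη
  obtain ⟨M, hM⟩ :=
    ((tendsto_measure_norm_ge_atTop_zero (μ'.map Z)).eventually_lt_const hη).exists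
  refine ⟨M, ?_⟩
  have h_closed : IsClosed {x : E | M ≤ ‖x‖} := isClosed_le continuous_const continuous_norm
  filter_upwards [eventually_lt_of_limsup_lt
    ((ProbabilityMeasure.limsup_measure_closed_le_of_tendsto h.tendsto h_closed).trans_lt hM)]
    with i hi
  rw [ProbabilityMeasure.coe_mk, Measure.map_apply_of_aemeasurable (h.forall_aemeasurable i)
    h_closed.measurableSet] at hi
  exact hi.le

theorem tendstoInDistribution_of_forall_integral_tendsto [IsProbabilityMeasure μ]
    [TopologicalSpace E] [MeasurableSpace E] [OpensMeasurableSpace E]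
    {X : ι → Ω → E} (hX : ∀ i, AEMeasurable (X i) μ) (ν : Measure E) [IsProbabilityMeasure ν]
    (h : ∀ f : BoundedContinuousFunction E ℝ,
      Tendsto (fun i ↦ ∫ ω, f (X i ω) ∂μ) l (𝓝 (∫ x, f x ∂ν))) :
    TendstoInDistribution X l id (fun _ ↦ μ) ν where
  forall_aemeasurable := hX
  tendsto := by
    refine ProbabilityMeasure.tendsto_iff_forall_integral_tendsto.2 fun f ↦ ?_
    simp only [ProbabilityMeasure.coe_mk, Measure.map_id]
    simpa [integral_map (hX _) f.continuous.aestronglyMeasurable] using h f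

end MeasureTheory

theorem stmt_6_general {Ω : Type*} [MeasurableSpace Ω] (P : Measure Ω) [IsProbabilityMeasure P]
    (p : ℕ) (x : ℕ → Ω → Fin p → ℝ) (x₀ : Fin p → ℝ)
    (y : ℕ → Ω → ℝ) (y₀ : ℝ)
    (hxm : ∀ n, Measurable (x n)) (hym : ∀ n, Measurable (y n))
    (c d : ℕ → ℝ) (hd : ∀ n, 0 < d n)
    (hcd : Tendsto (fun n => c n / d n) atTop (𝓝 0))
    (hdtop : Tendsto d atTop atTop)
    (σ₂sq : NNReal)
    (μ₁ : Measure (Fin p → ℝ)) [IsProbabilityMeasure μ₁]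
    (hxconv : ∀ f : BoundedContinuousFunction (Fin p → ℝ) ℝ,
      Tendsto (fun n => ∫ ω, f (c n • (x n ω - x₀)) ∂P) atTop (𝓝 (∫ z, f z ∂μ₁)))
    (hyconv : ∀ f : BoundedContinuousFunction ℝ ℝ,
      Tendsto (fun n => ∫ ω, f (d n * (y n ω - y₀)) ∂P) atTop
        (𝓝 (∫ z, f z ∂(gaussianReal 0 σ₂sq)))) :
    TendstoInMeasure P
      (fun n ω => c n • ((y n ω) • x n ω - y₀ • x₀) - y₀ • (c n • (x n ω - x₀)))
      atTop (fun _ => (0 : Fin p → ℝ)) := by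
  have hW : BoundedInProbability P (fun n ω ↦ d n * (y n ω - y₀)) atTop :=
    (tendstoInDistribution_of_forall_integral_tendsto
      (fun n ↦ (((hym n).sub_const y₀).const_mul (d n)).aemeasurable) _
      hyconv).boundedInProbability
  have hV : BoundedInProbability P (fun n ω ↦ c n • (x n ω - x₀)) atTop :=
    (tendstoInDistribution_of_forall_integral_tendsto
      (fun n ↦ (((hxm n).sub_const x₀).const_smul (c n)).aemeasurable) _
      hxconv).boundedInProbability
  have h_decomp : ∀ n ω, c n • (y n ω • x n ω - y₀ • x₀) - y₀ • (c n • (x n ω - x₀))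
      = (c n / d n) • ((d n * (y n ω - y₀)) • x₀)
        + (d n)⁻¹ • ((d n * (y n ω - y₀)) • (c n • (x n ω - x₀))) := by
    intro n ω
    have hdn : d n ≠ 0 := (hd n).ne'
    match_scalars <;> field_simp; ring
  simp_rw [h_decomp]
  simpa using ((hW.smul (boundedInProbability_const x₀)).tendstoInMeasure_smul hcd).add
    ((hW.smul hV).tendstoInMeasure_smul hdtop.inv_tendsto_atTop)

/-- Slutsky-type lemma (Lemma 2, product form): if `cₙ(xₙ − x₀)` converges in
distribution to a centered Gaussian vector with covariance `Σ₁`, `dₙ(yₙ − y₀)`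
converges in distribution to a centered normal with variance `σ₂²`, `cₙ/dₙ → 0`,
`dₙ → ∞`, and `yₙ, y₀` are bounded away from zero, then
`cₙ(xₙ·yₙ − x₀·y₀) − cₙ(xₙ − x₀)·y₀` converges to `0` in probability. -/
theorem stmt_6 {Ω : Type*} [MeasurableSpace Ω] (P : Measure Ω) [IsProbabilityMeasure P]
    (p : ℕ) (x : ℕ → Ω → Fin p → ℝ) (x₀ : Fin p → ℝ)
    (y : ℕ → Ω → ℝ) (y₀ : ℝ)
    (hxm : ∀ n, Measurable (x n)) (hym : ∀ n, Measurable (y n))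
    (c d : ℕ → ℝ) (hc : ∀ n, 0 < c n) (hd : ∀ n, 0 < d n)
    (hcd : Tendsto (fun n => c n / d n) atTop (𝓝 0))
    (hdtop : Tendsto d atTop atTop)
    (S₁ : Matrix (Fin p) (Fin p) ℝ) (σ₂sq : NNReal)
    (μ₁ : Measure (Fin p → ℝ)) [IsProbabilityMeasure μ₁]
    (hμ₁ : ∀ v : Fin p → ℝ,
      μ₁.map (fun z => v ⬝ᵥ z) = gaussianReal 0 (Real.toNNReal (v ⬝ᵥ S₁ *ᵥ v)))
    (hxconv : ∀ f : BoundedContinuousFunction (Fin p → ℝ) ℝ,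
      Tendsto (fun n => ∫ ω, f (c n • (x n ω - x₀)) ∂P) atTop (𝓝 (∫ z, f z ∂μ₁)))
    (hyconv : ∀ f : BoundedContinuousFunction ℝ ℝ,
      Tendsto (fun n => ∫ ω, f (d n * (y n ω - y₀)) ∂P) atTop
        (𝓝 (∫ z, f z ∂(gaussianReal 0 σ₂sq))))
    (ε : ℝ) (hε : 0 < ε) (hyn : ∀ n, ∀ᵐ ω ∂P, ε ≤ |y n ω|) (hy₀ : ε ≤ |y₀|) :
    TendstoInMeasure P
      (fun n ω => c n • ((y n ω) • x n ω - y₀ • x₀) - y₀ • (c n • (x n ω - x₀)))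
      atTop (fun _ => (0 : Fin p → ℝ)) :=
  stmt_6_general P p x x₀ y y₀ hxm hym c d hd hcd hdtop σ₂sq μ₁ hxconv hyconv
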